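/- arXiv:1805.12333 — 2 statements merged into one kernel-verified Lean document; each statement's English description precedes it below -/
import Mathlib

section
/- Let P be a probability distribution on a nonempty finite set 𝒳 with P(x) > 0 for all x, and let H0 be any real number. Then the maximum over all probability distributions Q on 𝒳 of min{ H_Q(X), H0 − D(Q‖P) } equals the minimum over s ∈ [0,1] of { ln( Σ_x P(x)^s ) + s H0 }. -/
open Finset

/-- A probability distribution on a finite set: nonnegative and summing to 1. -/
def IsProb {α : Type*} [Fintype α] (Q : α → ℝ) : Prop :=
  (∀ a, 0 ≤ Q a) ∧ ∑ a, Q a = 1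

/-- Kullback–Leibler divergence `D(Q‖P) = Σ_a Q(a) ln(Q(a)/P(a))`
(with the convention `0 · ln(0/p) = 0`, automatic since `Real.log 0 = 0`
and the term is multiplied by `Q a = 0`). -/
noncomputable def KL {α : Type*} [Fintype α] (Q P : α → ℝ) : ℝ :=
  ∑ a, Q a * Real.log (Q a / P a)

/-- Shannon entropy `H_Q(X) = -Σ_x Q(x) ln Q(x)` (with `0 ln 0 = 0`). -/
noncomputable def entropy {α : Type*} [Fintype α] (Q : α → ℝ) : ℝ :=
  -∑ a, Q a * Real.log (Q a)

/-- The 𝒳-marginal of a joint distribution on `𝒳 × 𝒴`. -/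
noncomputable def margX {𝒳 𝒴 : Type*} [Fintype 𝒴] (Q : 𝒳 × 𝒴 → ℝ) : 𝒳 → ℝ :=
  fun x => ∑ y, Q (x, y)

/-- The 𝒴-marginal of a joint distribution on `𝒳 × 𝒴`. -/
noncomputable def margY {𝒳 𝒴 : Type*} [Fintype 𝒳] (Q : 𝒳 × 𝒴 → ℝ) : 𝒴 → ℝ :=
  fun y => ∑ x, Q (x, y)

/-- Conditional entropy `H_Q(X|Y) = -Σ_{x,y} Q(x,y) ln(Q(x,y)/Q_Y(y))` (with `0 ln 0 = 0`). -/
noncomputable def condEnt {𝒳 𝒴 : Type*} [Fintype 𝒳] [Fintype 𝒴] (Q : 𝒳 × 𝒴 → ℝ) : ℝ :=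
  -∑ x, ∑ y, Q (x, y) * Real.log (Q (x, y) / margY Q y)

/-!
Weak duality: for `s ∈ [0, 1]`, `min (H(Q), H0 - D(Q‖P)) ≤ (1 - s) H(Q) + s (H0 - D(Q‖P))`, and the
right side equals `Σ Q ln (P^s / Q) + s H0 ≤ ln Σ P^s + s H0` by Gibbs' inequality. The bound is
attained by the escort distribution `P_t = P^t / Σ P^t`: its entropy and divergence are affine in
`m(t) = E_{P_t}[ln P]`, and choosing `t ∈ [0, 1]` by the intermediate value theorem so that
`t (m(t) + H0) ≤ 0 ≤ (1 - t) (m(t) + H0)` (complementary slackness) gives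
`min (H(P_t), H0 - D(P_t‖P)) ≥ ln Σ P^t + t H0`.
-/

open Real

lemma mul_log_div_le {q r c : ℝ} (hq : 0 ≤ q) (hr : 0 < r) (hc : 0 < c) :
    q * log (r / q) ≤ q * log c + r / c - q := by
  rcases hq.eq_or_lt with rfl | hq
  · simpa using div_nonneg hr.le hc.le
  · have hrqc : 0 < r / (q * c) := by positivity
    have hsplit : log (r / q) = log (r / (q * c)) + log c := by
      rw [← log_mul hrqc.ne' hc.ne']
      field_simp
    calc q * log (r / q) = q * log (r / (q * c)) + q * log c := by rw [hsplit, mul_add]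
      _ ≤ q * (r / (q * c) - 1) + q * log c := by
          gcongr
          exact log_le_sub_one_of_pos hrqc
      _ = q * log c + r / c - q := by field_simp; ring

section Gibbs

variable {α : Type*} [Fintype α]

/-- Gibbs' inequality. -/
theorem sum_mul_log_div_le_log_sum [Nonempty α] {Q R : α → ℝ} (hQ : IsProb Q)
    (hR : ∀ a, 0 < R a) : ∑ a, Q a * log (R a / Q a) ≤ log (∑ a, R a) := by
  have hZ : 0 < ∑ a, R a := sum_pos (fun a _ => hR a) univ_nonempty
  calc ∑ a, Q a * log (R a / Q a)
      ≤ ∑ a, (Q a * log (∑ b, R b) + R a / ∑ b, R b - Q a) :=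
        sum_le_sum fun a _ => mul_log_div_le (hQ.1 a) (hR a) hZ
    _ = log (∑ a, R a) := by
        rw [sum_sub_distrib, sum_add_distrib, ← sum_mul, ← sum_div, hQ.2, div_self hZ.ne']
        ring

lemma sum_mul_log_rpow_div_eq {P : α → ℝ} (hP : ∀ a, 0 < P a) (Q : α → ℝ) (s : ℝ) :
    ∑ a, Q a * log (P a ^ s / Q a) = (1 - s) * entropy Q - s * KL Q P := by
  rw [entropy, KL, mul_neg, mul_sum, mul_sum, ← sum_neg_distrib, ← sum_sub_distrib]
  refine sum_congr rfl fun a _ => ?_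
  rcases eq_or_ne (Q a) 0 with hQa | hQa
  · simp [hQa]
  · rw [log_div (rpow_pos_of_pos (hP a) s).ne' hQa, log_rpow (hP a), log_div hQa (hP a).ne']
    ring

theorem min_entropy_sub_KL_le [Nonempty α] {P Q : α → ℝ} (hP : ∀ a, 0 < P a) (hQ : IsProb Q)
    (H0 : ℝ) {s : ℝ} (hs0 : 0 ≤ s) (hs1 : s ≤ 1) :
    min (entropy Q) (H0 - KL Q P) ≤ log (∑ a, P a ^ s) + s * H0 := by
  have hconvex : min (entropy Q) (H0 - KL Q P) ≤ (1 - s) * entropy Q + s * (H0 - KL Q P) := by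
    nlinarith [mul_le_mul_of_nonneg_left (min_le_left (entropy Q) (H0 - KL Q P)) (sub_nonneg.2 hs1),
      mul_le_mul_of_nonneg_left (min_le_right (entropy Q) (H0 - KL Q P)) hs0]
  have hgibbs := sum_mul_log_div_le_log_sum hQ fun a => rpow_pos_of_pos (hP a) s
  rw [sum_mul_log_rpow_div_eq hP] at hgibbs
  linarith

end Gibbs

section Escort

variable {α : Type*} [Fintype α] [Nonempty α] {P : α → ℝ}

noncomputable def escort (P : α → ℝ) (t : ℝ) : α → ℝ :=
  fun a => P a ^ t / ∑ b, P b ^ t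

lemma sum_rpow_pos (hP : ∀ a, 0 < P a) (t : ℝ) : 0 < ∑ a, P a ^ t :=
  sum_pos (fun a _ => rpow_pos_of_pos (hP a) t) univ_nonempty

lemma isProb_escort (hP : ∀ a, 0 < P a) (t : ℝ) : IsProb (escort P t) :=
  ⟨fun a => div_nonneg (rpow_pos_of_pos (hP a) t).le (sum_rpow_pos hP t).le, by
    simp only [escort]
    rw [← sum_div, div_self (sum_rpow_pos hP t).ne']⟩

lemma sum_escort_mul_log_rpow_div_escort (hP : ∀ a, 0 < P a) (s t : ℝ) :
    ∑ a, escort P t a * log (P a ^ s / escort P t a)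
      = log (∑ a, P a ^ t) + (s - t) * ∑ a, escort P t a * log (P a) := by
  have hlog : ∀ a, log (P a ^ s / escort P t a)
      = (s - t) * log (P a) + log (∑ b, P b ^ t) := by
    intro a
    dsimp only [escort]
    rw [div_div_eq_mul_div, log_div (mul_pos (rpow_pos_of_pos (hP a) s)
      (sum_rpow_pos hP t)).ne' (rpow_pos_of_pos (hP a) t).ne', log_mul (rpow_pos_of_pos (hP a) s).ne'
      (sum_rpow_pos hP t).ne', log_rpow (hP a), log_rpow (hP a)]
    ring
  simp_rw [hlog, mul_add, sum_add_distrib, ← sum_mul, (isProb_escort hP t).2, mul_left_comm _ (s - t), ← mul_sum]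
  ring

lemma entropy_escort (hP : ∀ a, 0 < P a) (t : ℝ) :
    entropy (escort P t) = log (∑ a, P a ^ t) - t * ∑ a, escort P t a * log (P a) := by
  have h := sum_escort_mul_log_rpow_div_escort hP 0 t
  rw [sum_mul_log_rpow_div_eq hP] at h
  linarith

lemma KL_escort (hP : ∀ a, 0 < P a) (t : ℝ) :
    KL (escort P t) P = -(log (∑ a, P a ^ t) + (1 - t) * ∑ a, escort P t a * log (P a)) := by
  have h := sum_escort_mul_log_rpow_div_escort hP 1 t
  rw [sum_mul_log_rpow_div_eq hP] at h
  linarith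

lemma continuous_sum_escort_mul_log (hP : ∀ a, 0 < P a) :
    Continuous fun t => ∑ a, escort P t a * log (P a) := by
  have hpow : ∀ a, Continuous fun t : ℝ => P a ^ t := fun a =>
    continuous_const.rpow continuous_id fun _ => Or.inl (hP a).ne'
  refine continuous_finsetSum _ fun a _ => ?_
  exact ((hpow a).div (continuous_finsetSum _ fun b _ => hpow b)
    fun t => (sum_rpow_pos hP t).ne').mul continuous_const

end Escort

lemma exists_mem_Icc_mul_nonpos_and_nonneg {c : ℝ → ℝ} (hc : ContinuousOn c (Set.Icc 0 1)) :
    ∃ t ∈ Set.Icc (0 : ℝ) 1, t * c t ≤ 0 ∧ 0 ≤ (1 - t) * c t := by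
  by_cases h0 : 0 ≤ c 0
  · exact ⟨0, ⟨le_rfl, zero_le_one⟩, by simp, by simpa using h0⟩
  by_cases h1 : c 1 ≤ 0
  · exact ⟨1, ⟨zero_le_one, le_rfl⟩, by simpa using h1, by simp⟩
  rw [not_le] at h0 h1
  obtain ⟨t, ht, hct⟩ := intermediate_value_Icc zero_le_one hc ⟨h0.le, h1.le⟩
  exact ⟨t, ht, by simp [hct], by simp [hct]⟩

lemma csSup_eq_csInf_of_forall_le {β : Type*} [ConditionallyCompleteLattice β] {S T : Set β}
    (h : ∀ v ∈ S, ∀ w ∈ T, v ≤ w) {a b : β} (ha : a ∈ S) (hb : b ∈ T) (hba : b ≤ a) :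
    sSup S = sInf T := by
  obtain rfl : a = b := le_antisymm (h a ha b hb) hba
  rw [IsGreatest.csSup_eq ⟨ha, fun v hv => h v hv a hb⟩,
    IsLeast.csInf_eq ⟨hb, fun w hw => h a ha w hw⟩]

theorem stmt_11_general {𝒳 : Type*} [Fintype 𝒳] [Nonempty 𝒳]
    (P : 𝒳 → ℝ) (hPpos : ∀ x, 0 < P x) (H0 : ℝ) :
    sSup {v | ∃ Q : 𝒳 → ℝ, IsProb Q ∧ v = min (entropy Q) (H0 - KL Q P)}
      = sInf {v | ∃ s : ℝ, 0 ≤ s ∧ s ≤ 1 ∧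
          v = Real.log (∑ x, P x ^ s) + s * H0} := by
  obtain ⟨t, ⟨ht0, ht1⟩, hslack0, hslack1⟩ := exists_mem_Icc_mul_nonpos_and_nonneg
    (c := fun t => ∑ x, escort P t x * log (P x) + H0)
    ((continuous_sum_escort_mul_log hPpos).add continuous_const).continuousOn
  refine csSup_eq_csInf_of_forall_le ?_ ⟨escort P t, isProb_escort hPpos t, rfl⟩
    ⟨t, ht0, ht1, rfl⟩ ?_
  · rintro _ ⟨Q, hQ, rfl⟩ _ ⟨s, hs0, hs1, rfl⟩
    exact min_entropy_sub_KL_le hPpos hQ H0 hs0 hs1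
  · rw [entropy_escort hPpos, KL_escort hPpos]
    exact le_min (by linarith) (by linarith)

/-- `max_Q min{H_Q(X), H0 - D(Q‖P)} = min_{0≤s≤1} {ln Σ_x P(x)^s + s H0}`. -/
theorem stmt_11 {𝒳 : Type*} [Fintype 𝒳] [Nonempty 𝒳]
    (P : 𝒳 → ℝ) (hP : IsProb P) (hPpos : ∀ x, 0 < P x) (H0 : ℝ) :
    sSup {v | ∃ Q : 𝒳 → ℝ, IsProb Q ∧ v = min (entropy Q) (H0 - KL Q P)}
      = sInf {v | ∃ s : ℝ, 0 ≤ s ∧ s ≤ 1 ∧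
          v = Real.log (∑ x, P x ^ s) + s * H0} :=
  stmt_11_general P hPpos H0
end

section
/- Let P_XY be a probability distribution on 𝒳×𝒴 with P_XY(x,y) > 0 for all (x,y), with 𝒳-marginal P_X, 𝒴-marginal P_Y, and conditional P_{X|Y}(x|y) = P_XY(x,y)/P_Y(y). Fix λ ∈ [0,1], ρ ≥ 0, and a probability distribution Q_Y on 𝒴. For a stochastic kernel Q_{X|Y} (a probability distribution Q_{X|Y}(·|y) on 𝒳 for each y ∈ 𝒴), let Q_X(x) = Σ_y Q_Y(y) Q_{X|Y}(x|y) denote the induced 𝒳-marginal. Then the infimum over all stochastic kernels Q_{X|Y} of Σ_y Q_Y(y) Σ_x Q_{X|Y}(x|y) [ ln( Q_{X|Y}(x|y)/P_{X|Y}(x|y) ) + (ρ+λ) ln(1/P_X(x)) + λ ln Q_{X|Y}(x|y) + ρ ln Q_X(x) ] equals −(1+λ) times the infimum over all probability distributions W on 𝒳 with W(x) > 0 for all x of Σ_y Q_Y(y) ln( Σ_x [ P_{X|Y}(x|y) · P_X(x)^{ρ+λ} · W(x)^{−ρ} ]^{1/(1+λ)} ). (All terms of the form 0·ln 0 are interpreted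 as 0.) -/
open Finset

/-!
With `a(y,x) = (P_{X|Y}(x|y) P_X(x)^{ρ+λ})^{1/(1+λ)}`, `s = ρ/(1+λ)` and
`B_W(y,x) = a(y,x) W(x)^{-s}`, the objective of a kernel `K` equals, for every positive `W`,
`(1+λ) Σ_y Q_Y(y) D(K(·|y) ‖ B_W(y,·)) + ρ D(Q_X ‖ W)`.
Gibbs' inequality bounds the first sum below by `-G(W)`, where
`G(W) = Σ_y Q_Y(y) ln Σ_x B_W(y,x)`, with equality for `K = B_W / Σ_x B_W`, and the
second term is nonnegative. So the objective is at least `-(1+λ) G(W)` for all `W`, and it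
remains to find `W` for which the kernel `B_W / Σ_x B_W` induces the marginal `Q_X = W`.
Since `G → ∞` at the boundary of the simplex, `G` has a minimiser `W` in its interior. If
`Q_X ≠ W`, then by `ln t ≤ t - 1` and Bernoulli's inequality the distribution
`V ∝ W (Q_X / W)^{1/(1+s)}` has `G(V) < G(W)`.
-/

open Real

section Simplex

variable {α : Type*} [Fintype α]

theorem isProb_uniform [Nonempty α] : IsProb (fun _ : α => (Fintype.card α : ℝ)⁻¹) := by
  have : (0 : ℝ) < Fintype.card α := by exact_mod_cast Fintype.card_pos
  exact ⟨fun _ => by positivity, by simp [Finset.card_univ]⟩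

theorem IsProb.exists_pos {Q : α → ℝ} (hQ : IsProb Q) : ∃ a, 0 < Q a := by
  obtain ⟨a, -, ha⟩ := exists_lt_of_sum_lt (f := 0) (g := Q) (s := univ) (by simp [hQ.2])
  exact ⟨a, ha⟩

theorem isProb_div_sum [Nonempty α] {B : α → ℝ} (hB : ∀ a, 0 < B a) :
    IsProb (fun a => B a / ∑ a', B a') := by
  have hS : 0 < ∑ a, B a := sum_pos (fun a _ => hB a) univ_nonempty
  exact ⟨fun a => div_nonneg (hB a).le hS.le, by rw [← sum_div, div_self hS.ne']⟩

theorem KL_self (Q : α → ℝ) : KL Q Q = 0 :=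
  sum_eq_zero fun a _ => by rcases eq_or_ne (Q a) 0 with h | h <;> simp [h]

theorem neg_log_sum_le_KL {K B : α → ℝ} (hK : IsProb K) (hB : ∀ a, 0 < B a) :
    -log (∑ a, B a) ≤ KL K B := by
  obtain ⟨a₀, -⟩ := hK.exists_pos
  set S := ∑ a, B a
  have hS : 0 < S := sum_pos (fun a _ => hB a) ⟨a₀, mem_univ _⟩
  have key : ∀ a, K a - B a / S ≤ K a * log (K a / B a) + K a * log S := by
    intro a
    rcases (hK.1 a).eq_or_lt with h | h
    · rw [← h]
      simpa using div_nonneg (hB a).le hS.le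
    · have hB' := hB a
      calc K a - B a / S = K a * (1 - (K a / B a * S)⁻¹) := by field_simp
        _ ≤ K a * log (K a / B a * S) :=
          mul_le_mul_of_nonneg_left (one_sub_inv_le_log_of_pos (by positivity)) h.le
        _ = K a * log (K a / B a) + K a * log S := by
          rw [log_mul (by positivity) hS.ne']; ring
  have hsum := sum_le_sum fun a (_ : a ∈ univ) => key a
  rw [sum_sub_distrib, ← sum_div, div_self hS.ne', hK.2, sum_add_distrib, ← sum_mul, hK.2]
    at hsum
  unfold KL
  linarith

theorem KL_nonneg {Q W : α → ℝ} (hQ : IsProb Q) (hW : IsProb W) (hWpos : ∀ a, 0 < W a) :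
    0 ≤ KL Q W := by
  simpa [hW.2] using neg_log_sum_le_KL hQ hWpos

theorem KL_div_sum [Nonempty α] {B : α → ℝ} (hB : ∀ a, 0 < B a) :
    KL (fun a => B a / ∑ a', B a') B = -log (∑ a, B a) := by
  have hS : 0 < ∑ a, B a := sum_pos (fun a _ => hB a) univ_nonempty
  calc KL (fun a => B a / ∑ a', B a') B = ∑ a, B a / (∑ a', B a') * -log (∑ a', B a') :=
        sum_congr rfl fun a _ => by rw [div_div_cancel_left' (hB a).ne', log_inv]
    _ = -log (∑ a, B a) := by rw [← sum_mul, (isProb_div_sum hB).2, one_mul]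

theorem mul_div_rpow_le {w q b : ℝ} (hw : 0 < w) (hq : 0 ≤ q) (hb0 : 0 ≤ b) (hb1 : b ≤ 1) :
    w * (q / w) ^ b ≤ w + b * (q - w) := by
  have := rpow_one_add_le_one_add_mul_self (s := q / w - 1)
    (by linarith [div_nonneg hq hw.le]) hb0 hb1
  rw [add_sub_cancel] at this
  calc w * (q / w) ^ b ≤ w * (1 + b * (q / w - 1)) := mul_le_mul_of_nonneg_left this hw.le
    _ = w + b * (q - w) := by field_simp

theorem mul_div_rpow_lt {w q b : ℝ} (hw : 0 < w) (hq : 0 ≤ q) (hqw : q ≠ w) (hb0 : 0 < b)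
    (hb1 : b < 1) : w * (q / w) ^ b < w + b * (q - w) := by
  have hqw' : q / w - 1 ≠ 0 := by rwa [sub_ne_zero, ne_eq, div_eq_one_iff_eq hw.ne']
  have := rpow_one_add_lt_one_add_mul_self (by linarith [div_nonneg hq hw.le]) hqw' hb0 hb1
  rw [add_sub_cancel] at this
  calc w * (q / w) ^ b < w * (1 + b * (q / w - 1)) := mul_lt_mul_of_pos_left this hw
    _ = w + b * (q - w) := by field_simp

theorem sum_mul_div_rpow_lt_one {Q W : α → ℝ} (hQ : IsProb Q) (hW : IsProb W)
    (hWpos : ∀ a, 0 < W a) (hQW : Q ≠ W) {b : ℝ} (hb0 : 0 < b) (hb1 : b < 1) :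
    ∑ a, W a * (Q a / W a) ^ b < 1 := by
  obtain ⟨a₀, ha₀⟩ := Function.ne_iff.mp hQW
  calc ∑ a, W a * (Q a / W a) ^ b < ∑ a, (W a + b * (Q a - W a)) :=
        sum_lt_sum (fun a _ => mul_div_rpow_le (hWpos a) (hQ.1 a) hb0.le hb1.le)
          ⟨a₀, mem_univ _, mul_div_rpow_lt (hWpos a₀) (hQ.1 a₀) ha₀ hb0 hb1⟩
    _ = 1 := by rw [sum_add_distrib, ← mul_sum, sum_sub_distrib, hQ.2, hW.2]; ring

theorem exists_sum_mul_div_rpow_neg_lt_one {Q W : α → ℝ} (hQ : IsProb Q)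
    (hQpos : ∀ a, 0 < Q a) (hW : IsProb W) (hWpos : ∀ a, 0 < W a) (hQW : Q ≠ W)
    {s : ℝ} (hs : 0 < s) :
    ∃ V, IsProb V ∧ (∀ a, 0 < V a) ∧ ∑ a, Q a * (V a / W a) ^ (-s) < 1 := by
  set b := (1 + s)⁻¹
  have hb0 : 0 < b := by positivity
  have hexp : 1 + b * -s = b := by simp only [b]; field_simp; ring
  have hpos : ∀ a, 0 < W a * (Q a / W a) ^ b := fun a => by
    have := hWpos a; have := hQpos a; positivity
  set c := ∑ a, W a * (Q a / W a) ^ b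
  obtain ⟨a₀, -⟩ := hQ.exists_pos
  have hc0 : 0 < c := sum_pos (fun a _ => hpos a) ⟨a₀, mem_univ _⟩
  have hc1 : c < 1 :=
    sum_mul_div_rpow_lt_one hQ hW hWpos hQW hb0 (inv_lt_one_of_one_lt₀ (by linarith))
  -- for `V ∝ W (Q / W) ^ b` every summand is `c ^ s` times a summand of `c`
  have hterm : ∀ a, Q a * (W a * (Q a / W a) ^ b / c / W a) ^ (-s)
      = W a * (Q a / W a) ^ b * c ^ s := fun a => by
    have hWa := hWpos a
    have hu : 0 < Q a / W a := div_pos (hQpos a) hWa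
    nth_rw 1 [show Q a = W a * (Q a / W a) by field_simp]
    generalize Q a / W a = u at hu ⊢
    rw [show W a * u ^ b / c / W a = u ^ b / c by field_simp, div_rpow (by positivity) hc0.le,
      ← rpow_mul hu.le, rpow_neg hc0.le, div_inv_eq_mul, mul_assoc (W a), ← mul_assoc u,
      ← rpow_one_add' hu.le (by rw [hexp]; exact hb0.ne'), hexp, mul_assoc]
  refine ⟨fun a => W a * (Q a / W a) ^ b / c, ⟨fun a => (div_pos (hpos a) hc0).le, ?_⟩,
    fun a => div_pos (hpos a) hc0, ?_⟩
  · rw [← sum_div, div_self hc0.ne']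
  calc ∑ a, Q a * (W a * (Q a / W a) ^ b / c / W a) ^ (-s) = c ^ (1 + s) := by
        rw [sum_congr rfl fun a _ => hterm a, ← sum_mul, rpow_one_add' hc0.le (by positivity)]
    _ < 1 := rpow_lt_one hc0.le hc1 (by positivity)

theorem exists_isProb_forall_le_of_coercive [Nonempty α] {f : (α → ℝ) → ℝ}
    (hf : ContinuousOn f {W | ∀ a, 0 < W a})
    (hcoer : ∀ M, ∃ δ : α → ℝ, (∀ a, 0 < δ a) ∧
      ∀ W, IsProb W → (∀ a, 0 < W a) → f W ≤ M → ∀ a, δ a ≤ W a) :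
    ∃ W, IsProb W ∧ (∀ a, 0 < W a) ∧ ∀ V, IsProb V → (∀ a, 0 < V a) → f W ≤ f V := by
  set u : α → ℝ := fun _ => (Fintype.card α : ℝ)⁻¹
  have hupos : ∀ a, 0 < u a := fun _ => by simp only [u]; positivity
  obtain ⟨δ, hδ, hsub⟩ := hcoer (f u)
  set S := stdSimplex ℝ α ∩ {W | ∀ a, δ a ≤ W a}
  have hSpos : ∀ W ∈ S, ∀ a, 0 < W a := fun W hW a => (hδ a).trans_le (hW.2 a)
  have hS : IsCompact S := (isCompact_stdSimplex ℝ α).inter_right <| by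
    simp only [Set.ofPred_forall]
    exact isClosed_iInter fun a => isClosed_le continuous_const (continuous_apply a)
  have huS : u ∈ S := ⟨isProb_uniform, hsub u isProb_uniform hupos le_rfl⟩
  obtain ⟨W, hWS, hWmin⟩ := hS.exists_isMinOn ⟨u, huS⟩ (hf.mono hSpos)
  refine ⟨W, hWS.1, hSpos W hWS, fun V hV hVpos => ?_⟩
  by_cases hVu : f V ≤ f u
  · exact hWmin ⟨hV, hsub V hV hVpos hVu⟩
  · exact (hWmin huS).trans (not_le.1 hVu).le

end Simplex

section Kernel

variable {𝒳 𝒴 : Type*} {a : 𝒴 → 𝒳 → ℝ} {QY : 𝒴 → ℝ}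

noncomputable def tilted (a : 𝒴 → 𝒳 → ℝ) (s : ℝ) (W : 𝒳 → ℝ) (y : 𝒴) (x : 𝒳) : ℝ :=
  a y x * W x ^ (-s)

theorem tilted_pos (ha : ∀ y x, 0 < a y x) {W : 𝒳 → ℝ} (hW : ∀ x, 0 < W x) (s : ℝ) (y : 𝒴)
    (x : 𝒳) : 0 < tilted a s W y x :=
  mul_pos (ha y x) (rpow_pos_of_pos (hW x) _)

theorem tilted_eq_mul_div_rpow {W V : 𝒳 → ℝ} (hW : ∀ x, 0 < W x) (hV : ∀ x, 0 < V x) (s : ℝ)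
    (y : 𝒴) (x : 𝒳) : tilted a s V y x = tilted a s W y x * (V x / W x) ^ (-s) := by
  have := rpow_pos_of_pos (hW x) (-s)
  rw [tilted, tilted, div_rpow (hV x).le (hW x).le]
  field_simp

section

variable [Fintype 𝒴]

def mixture (QY : 𝒴 → ℝ) (K : 𝒴 → 𝒳 → ℝ) (x : 𝒳) : ℝ :=
  ∑ y, QY y * K y x

theorem mixture_pos (hQY : IsProb QY) {K : 𝒴 → 𝒳 → ℝ} (hK : ∀ y x, 0 < K y x) (x : 𝒳) :
    0 < mixture QY K x := by
  obtain ⟨y, hy⟩ := hQY.exists_pos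
  exact sum_pos' (fun y _ => mul_nonneg (hQY.1 y) (hK y x).le) ⟨y, mem_univ _, mul_pos hy (hK y x)⟩

end

section

variable [Fintype 𝒳]

noncomputable def gibbsKernel (a : 𝒴 → 𝒳 → ℝ) (s : ℝ) (W : 𝒳 → ℝ) (y : 𝒴) (x : 𝒳) : ℝ :=
  tilted a s W y x / ∑ x', tilted a s W y x'

theorem isProb_gibbsKernel [Nonempty 𝒳] (ha : ∀ y x, 0 < a y x) {W : 𝒳 → ℝ}
    (hW : ∀ x, 0 < W x) (s : ℝ) (y : 𝒴) : IsProb (gibbsKernel a s W y) :=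
  isProb_div_sum (tilted_pos ha hW s y)

theorem gibbsKernel_pos [Nonempty 𝒳] (ha : ∀ y x, 0 < a y x) {W : 𝒳 → ℝ}
    (hW : ∀ x, 0 < W x) (s : ℝ) (y : 𝒴) (x : 𝒳) : 0 < gibbsKernel a s W y x :=
  div_pos (tilted_pos ha hW s y x) (sum_pos (fun x _ => tilted_pos ha hW s y x) univ_nonempty)

theorem KL_gibbsKernel [Nonempty 𝒳] (ha : ∀ y x, 0 < a y x) {W : 𝒳 → ℝ}
    (hW : ∀ x, 0 < W x) (s : ℝ) (y : 𝒴) :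
    KL (gibbsKernel a s W y) (tilted a s W y) = -log (∑ x, tilted a s W y x) :=
  KL_div_sum (tilted_pos ha hW s y)

end

variable [Fintype 𝒳] [Fintype 𝒴]

noncomputable def logPartition (a : 𝒴 → 𝒳 → ℝ) (s : ℝ) (QY : 𝒴 → ℝ) (W : 𝒳 → ℝ) : ℝ :=
  ∑ y, QY y * log (∑ x, tilted a s W y x)

noncomputable def kernelCost (a : 𝒴 → 𝒳 → ℝ) (p r : ℝ) (QY : 𝒴 → ℝ) (K : 𝒴 → 𝒳 → ℝ) : ℝ :=
  ∑ y, QY y * ∑ x, K y x * (p * log (K y x / a y x) + r * log (mixture QY K x))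

theorem sum_mul_sum_mul_eq_sum_mixture (QY : 𝒴 → ℝ) (K : 𝒴 → 𝒳 → ℝ) (f : 𝒳 → ℝ) :
    ∑ y, QY y * ∑ x, K y x * f x = ∑ x, mixture QY K x * f x := by
  simp only [mixture, mul_sum, sum_mul, mul_assoc]
  exact sum_comm

theorem isProb_mixture (hQY : IsProb QY) {K : 𝒴 → 𝒳 → ℝ} (hK : ∀ y, IsProb (K y)) :
    IsProb (mixture QY K) :=
  ⟨fun x => sum_nonneg fun y _ => mul_nonneg (hQY.1 y) ((hK y).1 x), by
    simpa [fun y => (hK y).2, hQY.2] using (sum_mul_sum_mul_eq_sum_mixture QY K fun _ => 1).symm⟩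

theorem kernelCost_eq_add_KL (ha : ∀ y x, 0 < a y x) {W : 𝒳 → ℝ} (hW : ∀ x, 0 < W x)
    {p : ℝ} (hp : p ≠ 0) (r : ℝ) (K : 𝒴 → 𝒳 → ℝ) :
    kernelCost a p r QY K
      = p * ∑ y, QY y * KL (K y) (tilted a (r / p) W y) + r * KL (mixture QY K) W := by
  have hterm : ∀ y x, K y x * (p * log (K y x / a y x) + r * log (mixture QY K x))
      = p * (K y x * log (K y x / tilted a (r / p) W y x))
        + K y x * (r * (log (mixture QY K x) - log (W x))) := fun y x => by
    rcases eq_or_ne (K y x) 0 with h | h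
    · simp [h]
    rw [log_div h (tilted_pos ha hW _ y x).ne', log_div h (ha y x).ne', tilted,
      log_mul (ha y x).ne' (rpow_pos_of_pos (hW x) _).ne', log_rpow (hW x)]
    field_simp
    ring
  have hmix : ∀ x, mixture QY K x * (r * (log (mixture QY K x) - log (W x)))
      = r * (mixture QY K x * log (mixture QY K x / W x)) := fun x => by
    rcases eq_or_ne (mixture QY K x) 0 with h | h
    · simp [h]
    rw [log_div h (hW x).ne']
    ring
  have hsplit : kernelCost a p r QY K = p * ∑ y, QY y * KL (K y) (tilted a (r / p) W y)
      + ∑ y, QY y * ∑ x, K y x * (r * (log (mixture QY K x) - log (W x))) := by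
    simp only [kernelCost, KL, hterm, mul_add, sum_add_distrib, mul_sum]
    congr 1
    exact sum_congr rfl fun y _ => sum_congr rfl fun x _ => by ring
  rw [hsplit, sum_mul_sum_mul_eq_sum_mixture, sum_congr rfl fun x _ => hmix x, ← mul_sum, KL]

theorem neg_mul_logPartition_le_kernelCost (ha : ∀ y x, 0 < a y x) {p r : ℝ} (hp : 0 < p)
    (hr : 0 ≤ r) (hQY : IsProb QY) {K : 𝒴 → 𝒳 → ℝ} (hK : ∀ y, IsProb (K y)) {W : 𝒳 → ℝ}
    (hW : IsProb W) (hWpos : ∀ x, 0 < W x) :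
    -p * logPartition a (r / p) QY W ≤ kernelCost a p r QY K := by
  have hgibbs : -logPartition a (r / p) QY W ≤ ∑ y, QY y * KL (K y) (tilted a (r / p) W y) := by
    rw [logPartition, ← sum_neg_distrib]
    exact sum_le_sum fun y _ => by
      rw [← mul_neg]
      exact mul_le_mul_of_nonneg_left
        (neg_log_sum_le_KL (hK y) (tilted_pos ha hWpos _ y)) (hQY.1 y)
  have hKL := KL_nonneg (isProb_mixture hQY hK) hW hWpos
  rw [kernelCost_eq_add_KL ha hWpos hp.ne']
  nlinarith

theorem kernelCost_gibbsKernel [Nonempty 𝒳] (ha : ∀ y x, 0 < a y x) {W : 𝒳 → ℝ}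
    (hW : ∀ x, 0 < W x) {p : ℝ} (hp : p ≠ 0) (r : ℝ) :
    kernelCost a p r QY (gibbsKernel a (r / p) W)
      = -p * logPartition a (r / p) QY W
        + r * KL (mixture QY (gibbsKernel a (r / p) W)) W := by
  rw [kernelCost_eq_add_KL ha hW hp]
  simp only [KL_gibbsKernel ha hW, logPartition, mul_neg, sum_neg_distrib]
  ring

theorem sum_mul_log_sub_le_logPartition (ha : ∀ y x, 0 < a y x) (hQY : IsProb QY)
    {W : 𝒳 → ℝ} (hW : ∀ x, 0 < W x) (s : ℝ) (x₀ : 𝒳) :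
    ∑ y, QY y * log (a y x₀) - s * log (W x₀) ≤ logPartition a s QY W := by
  have hterm : ∀ y, log (a y x₀) - s * log (W x₀) ≤ log (∑ x, tilted a s W y x) := fun y => by
    have hlog : log (tilted a s W y x₀) = log (a y x₀) - s * log (W x₀) := by
      rw [tilted, log_mul (ha y x₀).ne' (rpow_pos_of_pos (hW x₀) _).ne', log_rpow (hW x₀)]
      ring
    rw [← hlog]
    exact log_le_log (tilted_pos ha hW s y x₀)
      (single_le_sum (fun x _ => (tilted_pos ha hW s y x).le) (mem_univ x₀))
  calc ∑ y, QY y * log (a y x₀) - s * log (W x₀)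
      _ = ∑ y, QY y * (log (a y x₀) - s * log (W x₀)) := by
        simp only [mul_sub, sum_sub_distrib, ← sum_mul, hQY.2, one_mul]
      _ ≤ logPartition a s QY W :=
        sum_le_sum fun y _ => mul_le_mul_of_nonneg_left (hterm y) (hQY.1 y)

theorem continuousOn_logPartition [Nonempty 𝒳] (ha : ∀ y x, 0 < a y x) (s : ℝ) :
    ContinuousOn (logPartition a s QY) {W | ∀ x, 0 < W x} := by
  refine continuousOn_finsetSum _ fun y _ => continuousOn_const.mul <| ContinuousOn.log ?_
    fun W hW => (sum_pos (fun x _ => tilted_pos ha hW s y x) univ_nonempty).ne'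
  exact continuousOn_finsetSum _ fun x _ => continuousOn_const.mul <|
    (continuous_apply x).continuousOn.rpow_const fun W hW => Or.inl (hW x).ne'

theorem exists_isProb_forall_logPartition_le [Nonempty 𝒳] (ha : ∀ y x, 0 < a y x) {s : ℝ}
    (hs : 0 < s) (hQY : IsProb QY) :
    ∃ W, IsProb W ∧ (∀ x, 0 < W x) ∧
      ∀ V, IsProb V → (∀ x, 0 < V x) → logPartition a s QY W ≤ logPartition a s QY V := by
  refine exists_isProb_forall_le_of_coercive (continuousOn_logPartition ha s) fun M =>
    ⟨fun x => exp ((∑ y, QY y * log (a y x) - M) / s), fun _ => exp_pos _,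
      fun W _ hW hWM x => ?_⟩
  have := sum_mul_log_sub_le_logPartition ha hQY hW s x
  rw [← exp_log (hW x), exp_le_exp, div_le_iff₀ hs]
  linarith

theorem logPartition_sub_le [Nonempty 𝒳] (ha : ∀ y x, 0 < a y x) (hQY : IsProb QY) {W V : 𝒳 → ℝ}
    (hW : ∀ x, 0 < W x) (hV : ∀ x, 0 < V x) (s : ℝ) :
    logPartition a s QY V - logPartition a s QY W
      ≤ ∑ x, mixture QY (gibbsKernel a s W) x * (V x / W x) ^ (-s) - 1 := by
  have hZ : ∀ U : 𝒳 → ℝ, (∀ x, 0 < U x) → ∀ y, 0 < ∑ x, tilted a s U y x := fun U hU y =>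
    sum_pos (fun x _ => tilted_pos ha hU s y x) univ_nonempty
  have hratio : ∀ y, (∑ x, tilted a s V y x) / (∑ x, tilted a s W y x)
      = ∑ x, gibbsKernel a s W y x * (V x / W x) ^ (-s) := fun y => by
    simp only [sum_div, gibbsKernel, tilted_eq_mul_div_rpow hW hV s y]
    exact sum_congr rfl fun x _ => by ring
  calc logPartition a s QY V - logPartition a s QY W
      _ = ∑ y, QY y * log ((∑ x, tilted a s V y x) / (∑ x, tilted a s W y x)) := by
        simp only [logPartition, ← sum_sub_distrib, ← mul_sub,
          log_div (hZ V hV _).ne' (hZ W hW _).ne']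
      _ ≤ ∑ y, QY y * ((∑ x, tilted a s V y x) / (∑ x, tilted a s W y x) - 1) :=
        sum_le_sum fun y _ => mul_le_mul_of_nonneg_left
          (log_le_sub_one_of_pos (div_pos (hZ V hV y) (hZ W hW y))) (hQY.1 y)
      _ = ∑ x, mixture QY (gibbsKernel a s W) x * (V x / W x) ^ (-s) - 1 := by
        simp only [hratio, mul_sub, mul_one, sum_sub_distrib, hQY.2,
          sum_mul_sum_mul_eq_sum_mixture]

theorem mixture_gibbsKernel_eq_of_forall_le [Nonempty 𝒳] (ha : ∀ y x, 0 < a y x) {s : ℝ}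
    (hs : 0 < s) (hQY : IsProb QY) {W : 𝒳 → ℝ} (hW : IsProb W) (hWpos : ∀ x, 0 < W x)
    (hmin : ∀ V, IsProb V → (∀ x, 0 < V x) → logPartition a s QY W ≤ logPartition a s QY V) :
    mixture QY (gibbsKernel a s W) = W := by
  by_contra hne
  obtain ⟨V, hV, hVpos, hlt⟩ := exists_sum_mul_div_rpow_neg_lt_one
    (isProb_mixture hQY (isProb_gibbsKernel ha hWpos s))
    (mixture_pos hQY (gibbsKernel_pos ha hWpos s)) hW hWpos hne hs
  linarith [hmin V hV hVpos, logPartition_sub_le ha hQY hWpos hVpos s]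

theorem exists_kernelCost_gibbsKernel_eq [Nonempty 𝒳] (ha : ∀ y x, 0 < a y x) {p r : ℝ}
    (hp : 0 < p) (hr : 0 ≤ r) (hQY : IsProb QY) :
    ∃ W, IsProb W ∧ (∀ x, 0 < W x) ∧
      (∀ V, IsProb V → (∀ x, 0 < V x) → logPartition a (r / p) QY W ≤ logPartition a (r / p) QY V) ∧
      kernelCost a p r QY (gibbsKernel a (r / p) W) = -p * logPartition a (r / p) QY W := by
  rcases hr.eq_or_lt with rfl | hr
  · have hu : ∀ x, 0 < (fun _ : 𝒳 => (Fintype.card 𝒳 : ℝ)⁻¹) x := fun _ => by positivity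
    refine ⟨_, isProb_uniform, hu, fun V _ _ => le_of_eq ?_, ?_⟩
    · simp [logPartition, tilted]
    · rw [kernelCost_gibbsKernel ha hu hp.ne', zero_mul, add_zero]
  obtain ⟨W, hW, hWpos, hmin⟩ := exists_isProb_forall_logPartition_le ha (div_pos hr hp) hQY
  refine ⟨W, hW, hWpos, hmin, ?_⟩
  rw [kernelCost_gibbsKernel ha hWpos hp.ne',
    mixture_gibbsKernel_eq_of_forall_le ha (div_pos hr hp) hQY hW hWpos hmin, KL_self, mul_zero,
    add_zero]

theorem sInf_kernelCost_eq [Nonempty 𝒳] (ha : ∀ y x, 0 < a y x) {p r : ℝ} (hp : 0 < p)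
    (hr : 0 ≤ r) (hQY : IsProb QY) :
    sInf {v | ∃ K : 𝒴 → 𝒳 → ℝ, (∀ y, IsProb (K y)) ∧ v = kernelCost a p r QY K}
      = -p * sInf
          {u | ∃ W : 𝒳 → ℝ, IsProb W ∧ (∀ x, 0 < W x) ∧ u = logPartition a (r / p) QY W} := by
  obtain ⟨W, hW, hWpos, hmin, hval⟩ := exists_kernelCost_gibbsKernel_eq ha hp hr hQY
  have hR : IsLeast {u | ∃ W : 𝒳 → ℝ, IsProb W ∧ (∀ x, 0 < W x) ∧ u = logPartition a (r / p) QY W}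
      (logPartition a (r / p) QY W) := by
    refine ⟨⟨W, hW, hWpos, rfl⟩, ?_⟩
    rintro _ ⟨V, hV, hVpos, rfl⟩
    exact hmin V hV hVpos
  have hL : IsLeast {v | ∃ K : 𝒴 → 𝒳 → ℝ, (∀ y, IsProb (K y)) ∧ v = kernelCost a p r QY K}
      (-p * logPartition a (r / p) QY W) := by
    refine ⟨⟨_, isProb_gibbsKernel ha hWpos _, hval.symm⟩, ?_⟩
    rintro _ ⟨K, hK, rfl⟩
    exact neg_mul_logPartition_le_kernelCost ha hp hr hQY hK hW hWpos
  rw [hL.csInf_eq, hR.csInf_eq]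

end Kernel

section Channel

variable {𝒳 𝒴 : Type*} {P : 𝒳 × 𝒴 → ℝ}

theorem margY_pos [Fintype 𝒳] [Nonempty 𝒳] (hP : ∀ p, 0 < P p) (y : 𝒴) : 0 < margY P y :=
  sum_pos (fun x _ => hP (x, y)) univ_nonempty

theorem margX_pos [Fintype 𝒴] [Nonempty 𝒴] (hP : ∀ p, 0 < P p) (x : 𝒳) : 0 < margX P x :=
  sum_pos (fun y _ => hP (x, y)) univ_nonempty

variable [Fintype 𝒳] [Fintype 𝒴]

noncomputable def tiltedConditional (P : 𝒳 × 𝒴 → ℝ) (l r : ℝ) (y : 𝒴) (x : 𝒳) : ℝ :=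
  (P (x, y) / margY P y * margX P x ^ (r + l)) ^ (1 / (1 + l))

theorem tiltedConditional_pos [Nonempty 𝒳] [Nonempty 𝒴] (hP : ∀ p, 0 < P p) (l r : ℝ) (y : 𝒴)
    (x : 𝒳) : 0 < tiltedConditional P l r y x := by
  have := margY_pos hP y
  have := margX_pos hP x
  have := hP (x, y)
  unfold tiltedConditional
  positivity

theorem sum_mul_sum_mul_log_eq_kernelCost [Nonempty 𝒳] [Nonempty 𝒴] (hP : ∀ p, 0 < P p) {l : ℝ}
    (hl : 0 < 1 + l) (r : ℝ) (QY : 𝒴 → ℝ) (K : 𝒴 → 𝒳 → ℝ) :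
    ∑ y, QY y * ∑ x, K y x *
        (log (K y x / (P (x, y) / margY P y)) + (r + l) * log (1 / margX P x)
          + l * log (K y x) + r * log (∑ y', QY y' * K y' x))
      = kernelCost (tiltedConditional P l r) (1 + l) r QY K := by
  refine sum_congr rfl fun y _ => congrArg _ <| sum_congr rfl fun x _ => ?_
  rcases eq_or_ne (K y x) 0 with h | h
  · simp [h]
  have hY := margY_pos hP y
  have hX := margX_pos hP x
  have hPxy := hP (x, y)
  rw [tiltedConditional, log_div h (by positivity), log_div h (by positivity),
    log_rpow (by positivity), log_mul (by positivity) (by positivity), log_rpow hX, one_div,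
    log_inv, mixture]
  field_simp
  ring

theorem sum_mul_log_sum_rpow_eq_logPartition (hP : ∀ p, 0 < P p) (l r : ℝ) (QY : 𝒴 → ℝ)
    {W : 𝒳 → ℝ} (hW : ∀ x, 0 < W x) :
    ∑ y, QY y * log (∑ x,
        ((P (x, y) / margY P y) * margX P x ^ (r + l) * W x ^ (-r)) ^ (1 / (1 + l)))
      = logPartition (tiltedConditional P l r) (r / (1 + l)) QY W := by
  refine sum_congr rfl fun y _ => congrArg _ <| congrArg _ <| sum_congr rfl fun x _ => ?_
  have hc : 0 ≤ P (x, y) / margY P y * margX P x ^ (r + l) :=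
    mul_nonneg (div_nonneg (hP _).le (sum_nonneg fun _ _ => (hP _).le))
      (rpow_nonneg (sum_nonneg fun _ _ => (hP _).le) _)
  rw [tilted, tiltedConditional, mul_rpow hc (rpow_nonneg (hW x).le _), ← rpow_mul (hW x).le]
  ring_nf

end Channel

theorem stmt_14_general {𝒳 𝒴 : Type*} [Fintype 𝒳] [Nonempty 𝒳] [Fintype 𝒴] [Nonempty 𝒴]
    (P : 𝒳 × 𝒴 → ℝ) (hPpos : ∀ p, 0 < P p)
    (l r : ℝ) (hl0 : 0 ≤ l) (hr : 0 ≤ r)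
    (QY : 𝒴 → ℝ) (hQY : IsProb QY) :
    sInf {v | ∃ K : 𝒴 → 𝒳 → ℝ, (∀ y, IsProb (K y)) ∧
        v = ∑ y, QY y * ∑ x, K y x *
            (Real.log (K y x / (P (x, y) / margY P y))
              + (r + l) * Real.log (1 / margX P x)
              + l * Real.log (K y x)
              + r * Real.log (∑ y', QY y' * K y' x))}
      = -(1 + l) * sInf {u | ∃ W : 𝒳 → ℝ, IsProb W ∧ (∀ x, 0 < W x) ∧
          u = ∑ y, QY y * Real.log (∑ x,
              ((P (x, y) / margY P y) * margX P x ^ (r + l) * W x ^ (-r))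
                ^ (1 / (1 + l)))} := by
  have hl : 0 < 1 + l := by linarith
  simp only [sum_mul_sum_mul_log_eq_kernelCost hPpos hl]
  convert sInf_kernelCost_eq (tiltedConditional_pos hPpos l r) hl hr hQY using 3
  ext u
  exact exists_congr fun W => and_congr_right fun _ => and_congr_right fun hW => by
    rw [sum_mul_log_sum_rpow_eq_logPartition hPpos l r QY hW]

/-- the inner-most minimization over the kernel `Q_{X|Y}`, introducing
the auxiliary distribution `W`. -/
theorem stmt_14 {𝒳 𝒴 : Type*} [Fintype 𝒳] [Nonempty 𝒳] [Fintype 𝒴] [Nonempty 𝒴]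
    (P : 𝒳 × 𝒴 → ℝ) (hP : IsProb P) (hPpos : ∀ p, 0 < P p)
    (l r : ℝ) (hl0 : 0 ≤ l) (hl1 : l ≤ 1) (hr : 0 ≤ r)
    (QY : 𝒴 → ℝ) (hQY : IsProb QY) :
    sInf {v | ∃ K : 𝒴 → 𝒳 → ℝ, (∀ y, IsProb (K y)) ∧
        v = ∑ y, QY y * ∑ x, K y x *
            (Real.log (K y x / (P (x, y) / margY P y))
              + (r + l) * Real.log (1 / margX P x)
              + l * Real.log (K y x)
              + r * Real.log (∑ y', QY y' * K y' x))}
      = -(1 + l) * sInf {u | ∃ W : 𝒳 → ℝ, IsProb W ∧ (∀ x, 0 < W x) ∧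
          u = ∑ y, QY y * Real.log (∑ x,
              ((P (x, y) / margY P y) * margX P x ^ (r + l) * W x ^ (-r))
                ^ (1 / (1 + l)))} :=
  stmt_14_general P hPpos l r hl0 hr QY hQY
end
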